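/- arXiv:2601.12571 — 5 statements merged into one kernel-verified Lean document; each statement's English description precedes it below -/
import Mathlib

section
/- Let N ≥ 2, let K_N be the complete graph on N vertices, and let a, b be two distinct vertices of K_N. Then for every real number x, the sum over all paths p from a to b in K_N of x raised to the number of vertices visited by p (i.e. x^(length(p)+1)) equals x² · Σ_{k=0}^{N−2} ((N−2)!/(N−2−k)!) · x^k, where (N−2)!/(N−2−k)! is the falling factorial (N−2)(N−3)⋯(N−1−k). -/
open SimpleGraph Finset
set_option linter.unusedSectionVars false
set_option linter.unusedVariables false
set_option maxHeartbeats 1000000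

section mk
variable {V : Type*} [DecidableEq V]

def mkW (b : V) : (c : V) → (l : List V) → b ∉ c :: l → (c :: l).Nodup → (⊤ : SimpleGraph V).Walk c b
  | c, [], hb, _ => Walk.cons (by simp only [top_adj]; exact fun h => hb (by simp [h]))
      Walk.nil
  | c, d :: l, hb, hn => Walk.cons
      (by simp only [top_adj]; exact fun h => (List.nodup_cons.1 hn).1 (h ▸ (List.mem_cons_self : d ∈ d :: l)))
      (mkW b d l (fun h => hb (List.mem_cons_of_mem _ h)) (List.nodup_cons.1 hn).2)

@[simp] lemma mkW_support (b : V) : ∀ (c : V) (l : List V) (hb hn),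
    (mkW b c l hb hn).support = c :: (l ++ [b])
  | c, [], hb, hn => by simp [mkW]
  | c, d :: l, hb, hn => by simp [mkW, mkW_support b d l]

lemma mkW_isPath (b : V) (c : V) (l : List V) (hb hn) : (mkW b c l hb hn).IsPath := by
  rw [Walk.isPath_def, mkW_support]
  simp only [List.mem_cons, not_or] at hb
  simp only [List.nodup_cons, List.nodup_append, List.nodup_singleton, List.mem_append,
    List.mem_singleton, List.disjoint_singleton, List.nodup_cons] at *
  exact ⟨fun h => h.elim hn.1 (fun h => hb.1 h.symm), hn.2,
    ⟨List.not_mem_nil, List.nodup_nil⟩, by intro y hy z hz hyz; subst hz; subst hyz; exact hb.2 hy⟩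

theorem eq_mkW (b : V) : ∀ {c : V} (w : (⊤ : SimpleGraph V).Walk c b) (l : List V)
    (hl : w.support = c :: (l ++ [b])) (hb : b ∉ c :: l) (hn : (c :: l).Nodup),
    w = mkW b c l hb hn
  | c, .nil, l, hl, _, _ => by simp at hl
  | c, .cons h .nil, l, hl, hb, hn => by
    obtain rfl : l = [] := by
      simp only [Walk.support_cons, Walk.support_nil] at hl
      have := congrArg List.length hl
      simp at this
      exact this
    rfl
  | c, .cons h (.cons h' q), l, hl, hb, hn => by
    match l with
    | [] =>
      exfalso
      simp only [Walk.support_cons, List.nil_append] at hl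
      have := congrArg List.length hl
      simp at this
    | d' :: l' =>
      simp only [Walk.support_cons, List.cons_append, List.cons.injEq] at hl
      obtain ⟨-, rfl, hl3⟩ := hl
      have hrec := eq_mkW b (Walk.cons h' q) l'
        (by simp [Walk.support_cons, hl3])
        (fun hm => hb (List.mem_cons_of_mem _ hm)) (List.nodup_cons.1 hn).2
      show _ = Walk.cons _ (mkW b _ l' _ _)
      rw [← hrec]

/-- interior vertices of a walk -/
def intr {c b : V} (w : (⊤ : SimpleGraph V).Walk c b) : List V := w.support.tail.dropLast

lemma support_decomp {a b : V} (hab : a ≠ b) (w : (⊤ : SimpleGraph V).Walk a b) :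
    w.support = a :: (intr w ++ [b]) := by
  have h0 : w.support.tail ≠ [] := by
    intro h
    have hb := w.end_mem_support
    rw [w.support_eq_cons, h] at hb
    simp at hb
    exact hab hb.symm
  have h2 : w.support.tail.getLast h0 = b := by
    rw [List.getLast_tail]
    exact w.getLast_support
  conv_lhs => rw [w.support_eq_cons, ← List.dropLast_append_getLast h0, h2]
  rfl

lemma intr_mkW (b c : V) (l : List V) (hb hn) : intr (mkW b c l hb hn) = l := by
  simp [intr, mkW_support, List.dropLast_concat]

end mk

/-- For the complete graph on `N ≥ 2` vertices and distinct vertices `a b`,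
the sum over all paths `p` from `a` to `b` of `x^(number of vertices visited by p)`
equals `x^2 * Σ_{k=0}^{N-2} ((N-2)!/(N-2-k)!) * x^k`. -/
theorem stmt1 (N : ℕ) (hN : 2 ≤ N) (a b : Fin N) (hab : a ≠ b) (x : ℝ) :
    ∑ p : (⊤ : SimpleGraph (Fin N)).Path a b, x ^ (p.val.length + 1) =
      x ^ 2 * ∑ k ∈ Finset.range (N - 1),
        ((Nat.factorial (N - 2) / Nat.factorial (N - 2 - k) : ℕ) : ℝ) * x ^ k := by
  classical
  set S : Finset (Fin N) := {a, b}ᶜ with hS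
  have hsupp : ∀ p : (⊤ : SimpleGraph (Fin N)).Path a b,
      p.val.support = a :: (intr p.val ++ [b]) := fun p => support_decomp hab p.val
  have hnd : ∀ p : (⊤ : SimpleGraph (Fin N)).Path a b,
      (a :: (intr p.val ++ [b])).Nodup := by
    intro p
    rw [← hsupp p]
    exact p.prop.support_nodup
  have hndI : ∀ p : (⊤ : SimpleGraph (Fin N)).Path a b, (intr p.val).Nodup := by
    intro p
    have := (List.nodup_cons.1 (hnd p)).2
    exact (List.nodup_append.1 this).1
  have hlen : ∀ p : (⊤ : SimpleGraph (Fin N)).Path a b,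
      p.val.length = (intr p.val).length + 1 := by
    intro p
    have := p.val.length_support
    rw [hsupp p] at this
    simp at this
    omega
  have hmem : ∀ p : (⊤ : SimpleGraph (Fin N)).Path a b, ∀ c ∈ intr p.val, c ∈ S := by
    intro p c hc
    have h := hnd p
    simp only [List.nodup_cons, List.nodup_append, List.mem_append,
      List.mem_singleton, List.disjoint_singleton] at h
    simp only [hS, Finset.mem_compl, Finset.mem_insert, Finset.mem_singleton, not_or]
    constructor
    · rintro rfl; exact h.1 (Or.inl hc)
    · rintro rfl; exact h.2.2.2 _ hc _ rfl rfl
  have hbound : ∀ p : (⊤ : SimpleGraph (Fin N)).Path a b, (intr p.val).length ∈ range (N - 1) := by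
    intro p
    have h1 : p.val.support.length ≤ N := by
      have := p.prop.support_nodup.length_le_card
      simpa using this
    rw [hsupp p] at h1
    simp at h1
    simp only [mem_range]
    omega
  have hcardS : S.card = N - 2 := by
    rw [hS, Finset.card_compl, Finset.card_insert_of_notMem (by simp [hab]),
      Finset.card_singleton]
    simp
  -- abbreviation for list from an embedding
  have hstep1 : (∑ p : (⊤ : SimpleGraph (Fin N)).Path a b, x ^ (p.val.length + 1)) =
      ∑ p : (⊤ : SimpleGraph (Fin N)).Path a b, x ^ ((intr p.val).length + 2) := by
    apply Finset.sum_congr rfl; intro p _; rw [hlen p]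
  rw [hstep1, ← Finset.sum_fiberwise_of_maps_to (g := fun p : (⊤ : SimpleGraph (Fin N)).Path a b =>
      (intr p.val).length) (fun p _ => hbound p), Finset.mul_sum]
  refine Finset.sum_congr rfl fun k hk => ?_
  have hk' : k ≤ N - 2 := by simp only [mem_range] at hk; omega
  have hstep2 : ∑ p ∈ Finset.univ.filter (fun p : (⊤ : SimpleGraph (Fin N)).Path a b =>
      (intr p.val).length = k), x ^ ((intr p.val).length + 2)
      = (Finset.univ.filter (fun p : (⊤ : SimpleGraph (Fin N)).Path a b =>
      (intr p.val).length = k)).card * x ^ (k + 2) := by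
    rw [Finset.sum_congr rfl (fun p hp => by rw [(Finset.mem_filter.1 hp).2])]
    rw [Finset.sum_const, nsmul_eq_mul]
  rw [hstep2]
  -- the list attached to an embedding
  have hbL : ∀ f : Fin k ↪ S, b ∉ a :: List.ofFn (fun i => ((f i : S) : Fin N)) := by
    intro f hbm
    rcases List.mem_cons.1 hbm with h | h
    · exact hab h.symm
    · obtain ⟨i, hi⟩ := List.mem_ofFn.1 h
      have := (f i).prop
      rw [hi] at this
      simp [hS] at this
  have haL : ∀ f : Fin k ↪ S, a ∉ List.ofFn (fun i => ((f i : S) : Fin N)) := by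
    intro f ham
    obtain ⟨i, hi⟩ := List.mem_ofFn.1 ham
    have := (f i).prop
    rw [hi] at this
    simp [hS] at this
  have hnL : ∀ f : Fin k ↪ S, (a :: List.ofFn (fun i => ((f i : S) : Fin N))).Nodup := by
    intro f
    rw [List.nodup_cons]
    refine ⟨haL f, ?_⟩
    rw [List.nodup_ofFn]
    exact Subtype.val_injective.comp f.injective
  have hcard : (Finset.univ.filter (fun p : (⊤ : SimpleGraph (Fin N)).Path a b =>
      (intr p.val).length = k)).card
      = (Finset.univ : Finset (Fin k ↪ S)).card := by
    refine Finset.card_bij'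
      (i := fun p hp => ⟨fun i => ⟨(intr p.val).get ⟨i.val, by
          rw [(Finset.mem_filter.1 hp).2]; exact i.isLt⟩,
        hmem p _ (List.get_mem _ _)⟩, ?_⟩)
      (j := fun f _ => ⟨mkW b a (List.ofFn fun i => ((f i : S) : Fin N)) (hbL f) (hnL f),
        mkW_isPath _ _ _ _ _⟩)
      (fun _ _ => Finset.mem_univ _) ?_ ?_ ?_
    · -- injectivity of the embedding map
      intro i j hij
      simp only [Subtype.mk.injEq] at hij
      have h2 := List.nodup_iff_injective_get.1 (hndI _) hij
      have h3 := congrArg Fin.val h2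
      exact Fin.ext h3
    · -- j maps into the filter
      intro f hf
      simp only [Finset.mem_filter, Finset.mem_univ, true_and]
      rw [intr_mkW]
      simp
    · -- left inverse
      intro p hp
      apply Subtype.ext
      have hIl : (intr p.val).length = k := (Finset.mem_filter.1 hp).2
      refine (eq_mkW b p.val _ ?_ _ _).symm
      rw [hsupp p]
      subst hIl
      exact congrArg (fun l => a :: (l ++ [b])) (List.ofFn_get (intr p.val)).symm
    · -- right inverse
      intro f hf
      ext i0
      have hL : intr ((⟨mkW b a (List.ofFn fun i => ((f i : S) : Fin N)) (hbL f) (hnL f),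
          mkW_isPath _ _ _ _ _⟩ : (⊤ : SimpleGraph (Fin N)).Path a b) : (⊤ : SimpleGraph (Fin N)).Walk a b)
          = List.ofFn fun i => ((f i : S) : Fin N) := intr_mkW _ _ _ _ _
      simp only [Function.Embedding.coeFn_mk, List.get_of_eq hL, List.get_ofFn]
      congr 1
  rw [hcard, Finset.card_univ, Fintype.card_embedding_eq, Fintype.card_coe, Fintype.card_fin,
    hcardS, Nat.descFactorial_eq_div hk']
  rw [pow_add]
  ring
end

section
/- Let σ : ℕ → [0,∞) be a nonnegative sequence with limsup_{n→∞} σ(n)^{1/n} = μ for some μ ∈ (0,∞). Let g be a nonzero real polynomial with nonnegative coefficients whose coefficients in degrees 0 and 1 vanish, and write b_{n,m} for the coefficient of degree m in g^n. Define c(m) = Σ_{n : 2n ≤ m} σ(n) · b_{n,m} (a finite sum for each m). Let ρ be the unique positive real with g(ρ) = μ^{−1}. Then limsup_{m→∞} c(m)^{1/m} = ρ^{−1}. -/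
open Polynomial Filter

lemma aux_eval_nonneg (p : Polynomial ℝ) (hp : ∀ i, 0 ≤ p.coeff i) {x : ℝ} (hx : 0 ≤ x) :
    0 ≤ p.eval x := by
  rw [Polynomial.eval_eq_sum_range]
  exact Finset.sum_nonneg fun i _ => mul_nonneg (hp i) (pow_nonneg hx i)

lemma aux_coeff_mul_pow_le_eval (p : Polynomial ℝ) (hp : ∀ i, 0 ≤ p.coeff i) {x : ℝ}
    (hx : 0 ≤ x) (m : ℕ) : p.coeff m * x ^ m ≤ p.eval x := by
  rcases le_or_gt m p.natDegree with h | h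
  · rw [Polynomial.eval_eq_sum_range]
    exact Finset.single_le_sum (f := fun i => p.coeff i * x ^ i)
      (fun i _ => mul_nonneg (hp i) (pow_nonneg hx i))
      (Finset.mem_range.mpr (Nat.lt_succ_of_le h))
  · rw [Polynomial.coeff_eq_zero_of_natDegree_lt h, zero_mul]
    exact aux_eval_nonneg p hp hx

lemma aux_coeff_pow_nonneg (g : Polynomial ℝ) (hg : ∀ i, 0 ≤ g.coeff i) (n : ℕ) :
    ∀ m, 0 ≤ (g ^ n).coeff m := by
  induction n with
  | zero =>
    intro m
    simp only [pow_zero, Polynomial.coeff_one]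
    split <;> norm_num
  | succ n ih =>
    intro m
    rw [pow_succ, Polynomial.coeff_mul]
    exact Finset.sum_nonneg fun x _ => mul_nonneg (ih x.1) (hg x.2)

lemma aux_coeff_pow_eq_zero (g : Polynomial ℝ) (hc0 : g.coeff 0 = 0) (hc1 : g.coeff 1 = 0)
    (n : ℕ) : ∀ m, m < 2 * n → (g ^ n).coeff m = 0 := by
  induction n with
  | zero => intro m hm; omega
  | succ n ih =>
    intro m hm
    rw [pow_succ, Polynomial.coeff_mul]
    apply Finset.sum_eq_zero
    rintro ⟨i, j⟩ hij
    rw [Finset.HasAntidiagonal.mem_antidiagonal] at hij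
    rcases lt_or_ge i (2 * n) with hi | hi
    · rw [ih i hi, zero_mul]
    · have : j < 2 := by omega
      interval_cases j
      · rw [hc0, mul_zero]
      · rw [hc1, mul_zero]

lemma aux_eval_lt_eval (g : Polynomial ℝ) (hg0 : g ≠ 0) (hgpos : ∀ i, 0 ≤ g.coeff i)
    (hc0 : g.coeff 0 = 0) {x y : ℝ} (hx : 0 ≤ x) (hxy : x < y) : g.eval x < g.eval y := by
  have hd : g.natDegree ≠ 0 := by
    intro h
    exact hg0 (by rw [Polynomial.eq_C_of_natDegree_eq_zero h, hc0, map_zero])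
  rw [Polynomial.eval_eq_sum_range, Polynomial.eval_eq_sum_range]
  apply Finset.sum_lt_sum
  · intro i _
    exact mul_le_mul_of_nonneg_left (pow_le_pow_left₀ hx hxy.le i) (hgpos i)
  · refine ⟨g.natDegree, Finset.mem_range.mpr (Nat.lt_succ_self _), ?_⟩
    have hlc : 0 < g.coeff g.natDegree :=
      (hgpos _).lt_of_ne (Ne.symm (Polynomial.leadingCoeff_ne_zero.mpr hg0))
    exact mul_lt_mul_of_pos_left (pow_lt_pow_left₀ hxy hx hd) hlc

/-- All finite partial sums of a sequence eventually dominated by a geometric series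
are bounded. -/
lemma aux_sum_le_const (f : ℕ → ℝ) (hf : ∀ n, 0 ≤ f n) (N : ℕ) {r : ℝ} (hr0 : 0 ≤ r)
    (hr1 : r < 1) (hb : ∀ n, N ≤ n → f n ≤ r ^ n) (s : Finset ℕ) :
    ∑ n ∈ s, f n ≤ (∑ n ∈ Finset.range N, f n) + (1 - r)⁻¹ := by
  classical
  have hsum : Summable (fun n : ℕ => r ^ n) := summable_geometric_of_lt_one hr0 hr1
  calc ∑ n ∈ s, f n
      = ∑ n ∈ s.filter (· < N), f n + ∑ n ∈ s.filter (fun n => ¬ n < N), f n :=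
        (Finset.sum_filter_add_sum_filter_not s _ f).symm
    _ ≤ (∑ n ∈ Finset.range N, f n) + (1 - r)⁻¹ := by
        apply add_le_add
        · apply Finset.sum_le_sum_of_subset_of_nonneg
          · intro i hi
            simp only [Finset.mem_filter] at hi
            exact Finset.mem_range.mpr hi.2
          · exact fun i _ _ => hf i
        · calc ∑ n ∈ s.filter (fun n => ¬ n < N), f n
              ≤ ∑ n ∈ s.filter (fun n => ¬ n < N), r ^ n := by
                apply Finset.sum_le_sum
                intro i hi
                simp only [Finset.mem_filter, not_lt] at hi
                exact hb i hi.2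
            _ ≤ ∑' n : ℕ, r ^ n :=
                Summable.sum_le_tsum _ (fun i _ => pow_nonneg hr0 i) hsum
            _ = (1 - r)⁻¹ := tsum_geometric_of_lt_one hr0 hr1

lemma aux_lt_pow_of_rpow_lt {u K : ℝ} (hu : 0 ≤ u) {n : ℕ} (hn : 1 ≤ n)
    (h : u ^ (1 / (n : ℝ)) < K) : u < K ^ n := by
  have hn' : (n : ℝ) ≠ 0 := Nat.cast_ne_zero.mpr (by omega)
  have hbase : 0 ≤ u ^ (1 / (n : ℝ)) := Real.rpow_nonneg hu _
  have : u = (u ^ (1 / (n : ℝ))) ^ n := by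
    rw [← Real.rpow_natCast (u ^ (1 / (n : ℝ))) n, ← Real.rpow_mul hu,
      one_div_mul_cancel hn', Real.rpow_one]
  rw [this]
  exact pow_lt_pow_left₀ h hbase (by omega)

lemma aux_pow_lt_of_lt_rpow {u K : ℝ} (hu : 0 ≤ u) (hK : 0 ≤ K) {n : ℕ} (hn : 1 ≤ n)
    (h : K < u ^ (1 / (n : ℝ))) : K ^ n < u := by
  have hn' : (n : ℝ) ≠ 0 := Nat.cast_ne_zero.mpr (by omega)
  have : u = (u ^ (1 / (n : ℝ))) ^ n := by
    rw [← Real.rpow_natCast (u ^ (1 / (n : ℝ))) n, ← Real.rpow_mul hu,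
      one_div_mul_cancel hn', Real.rpow_one]
  rw [this]
  exact pow_lt_pow_left₀ h hK (by omega)

lemma aux_tendsto_rpow_one_div {C : ℝ} (hC : 0 < C) :
    Tendsto (fun m : ℕ => C ^ (1 / (m : ℝ))) atTop (nhds 1) := by
  have h1 : Tendsto (fun m : ℕ => Real.log C * (1 / (m : ℝ))) atTop (nhds 0) := by
    simpa using tendsto_one_div_atTop_nhds_zero_nat.const_mul (Real.log C)
  have h2 := (Real.continuous_exp.tendsto 0).comp h1
  rw [Real.exp_zero] at h2
  have : (fun m : ℕ => C ^ (1 / (m : ℝ))) = Real.exp ∘ fun m : ℕ => Real.log C * (1 / (m : ℝ)) := by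
    funext m
    simp [Function.comp, Real.rpow_def_of_pos hC]
  rwa [this]

/-- If `σ : ℕ → [0,∞)` has `limsup σ(n)^{1/n} = μ ∈ (0,∞)`, `g` is a nonzero
real polynomial with nonnegative coefficients vanishing in degrees 0 and 1,
`c(m) = Σ_{n : 2n ≤ m} σ(n) b_{n,m}` where `b_{n,m}` is the degree-`m` coefficient of
`g^n`, and `ρ > 0` satisfies `g(ρ) = μ⁻¹`, then `limsup c(m)^{1/m} = ρ⁻¹`. -/
theorem stmt6 (σ : ℕ → ℝ) (hσ : ∀ n, 0 ≤ σ n) (μ : ℝ) (hμ : 0 < μ)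
    (hlim : Filter.limsup (fun n : ℕ => (σ n) ^ (1 / (n : ℝ))) Filter.atTop = μ)
    (g : Polynomial ℝ) (hg0 : g ≠ 0) (hgpos : ∀ m : ℕ, 0 ≤ g.coeff m)
    (hc0 : g.coeff 0 = 0) (hc1 : g.coeff 1 = 0)
    (c : ℕ → ℝ)
    (hc : ∀ m : ℕ, c m = ∑ n ∈ Finset.range (m / 2 + 1), σ n * (g ^ n).coeff m)
    (ρ : ℝ) (hρ : 0 < ρ) (hgρ : g.eval ρ = μ⁻¹) :
    Filter.limsup (fun m : ℕ => (c m) ^ (1 / (m : ℝ))) Filter.atTop = ρ⁻¹ := by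
  have hb := aux_coeff_pow_nonneg g hgpos
  have hcnn : ∀ m, 0 ≤ c m := by
    intro m
    rw [hc m]
    exact Finset.sum_nonneg fun n _ => mul_nonneg (hσ n) (hb n m)
  have hgx0 : ∀ x : ℝ, 0 < x → 0 < g.eval x := by
    intro x hx
    have h := aux_eval_lt_eval g hg0 hgpos hc0 le_rfl hx
    rwa [← Polynomial.coeff_zero_eq_eval_zero, hc0] at h
  -- σ(n)^{1/n} is bounded above
  have hbound : IsBoundedUnder (· ≤ ·) atTop (fun n : ℕ => (σ n) ^ (1 / (n : ℝ))) := by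
    by_contra h
    have hempty : { a : ℝ | ∀ᶠ n : ℕ in atTop, (σ n) ^ (1 / (n : ℝ)) ≤ a } = ∅ := by
      ext a
      simp only [Set.mem_setOf_eq, Set.mem_empty_iff_false, iff_false]
      intro ha
      exact h ⟨a, eventually_map.mpr ha⟩
    have : limsup (fun n : ℕ => (σ n) ^ (1 / (n : ℝ))) atTop = 0 := by
      rw [limsup_eq, hempty, Real.sInf_empty]
    rw [hlim] at this
    exact hμ.ne' this
  -- Key estimate: for 0 < x < ρ the coefficients c m are bounded by C x^{-m}
  have main : ∀ x : ℝ, 0 < x → x < ρ → ∃ C : ℝ, 1 ≤ C ∧ ∀ m, c m ≤ C * (x⁻¹) ^ m := by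
    intro x hx hxρ
    set gx := g.eval x with hgx
    have hgxpos : 0 < gx := hgx0 x hx
    have hgxlt : gx < μ⁻¹ := by
      rw [← hgρ]; exact aux_eval_lt_eval g hg0 hgpos hc0 hx.le hxρ
    have hμlt : μ < gx⁻¹ := by
      rw [← inv_inv μ]
      exact inv_strictAnti₀ hgxpos hgxlt
    obtain ⟨K, hK1, hK2⟩ := exists_between hμlt
    have hKpos : 0 < K := lt_trans hμ hK1
    have hr1 : K * gx < 1 := by
      have := mul_lt_mul_of_pos_right hK2 hgxpos
      rwa [inv_mul_cancel₀ hgxpos.ne'] at this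
    have hr0 : 0 ≤ K * gx := le_of_lt (mul_pos hKpos hgxpos)
    -- eventually σ n < K ^ n
    have hev : ∀ᶠ n : ℕ in atTop, (σ n) ^ (1 / (n : ℝ)) < K :=
      eventually_lt_of_limsup_lt (hlim ▸ hK1) hbound
    obtain ⟨N₀, hN₀⟩ := eventually_atTop.mp hev
    set N := max N₀ 1 with hN
    have hσb : ∀ n, N ≤ n → σ n * gx ^ n ≤ (K * gx) ^ n := by
      intro n hn
      have h1 : σ n < K ^ n :=
        aux_lt_pow_of_rpow_lt (hσ n) (le_trans (le_max_right _ _) hn)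
          (hN₀ n (le_trans (le_max_left _ _) hn))
      rw [mul_pow]
      exact mul_le_mul_of_nonneg_right h1.le (pow_nonneg hgxpos.le n)
    set C₀ : ℝ := (∑ n ∈ Finset.range N, σ n * gx ^ n) + (1 - K * gx)⁻¹ with hC₀
    have hpartial : ∀ s : Finset ℕ, ∑ n ∈ s, σ n * gx ^ n ≤ C₀ :=
      aux_sum_le_const (fun n => σ n * gx ^ n)
        (fun n => mul_nonneg (hσ n) (pow_nonneg hgxpos.le n)) N hr0 hr1 hσb
    refine ⟨max C₀ 1, le_max_right _ _, fun m => ?_⟩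
    have hcm : c m * x ^ m ≤ C₀ := by
      rw [hc m, Finset.sum_mul]
      calc ∑ n ∈ Finset.range (m / 2 + 1), σ n * (g ^ n).coeff m * x ^ m
          ≤ ∑ n ∈ Finset.range (m / 2 + 1), σ n * gx ^ n := by
            apply Finset.sum_le_sum
            intro n _
            rw [mul_assoc]
            apply mul_le_mul_of_nonneg_left _ (hσ n)
            calc (g ^ n).coeff m * x ^ m ≤ (g ^ n).eval x :=
                  aux_coeff_mul_pow_le_eval _ (hb n) hx.le m
              _ = gx ^ n := by rw [Polynomial.eval_pow]
        _ ≤ C₀ := hpartial _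
    have hxm : (0 : ℝ) < x ^ m := pow_pos hx m
    have : c m ≤ C₀ * (x⁻¹) ^ m := by
      rw [← le_div_iff₀ hxm] at hcm
      calc c m ≤ C₀ / x ^ m := hcm
        _ = C₀ * (x⁻¹) ^ m := by rw [div_eq_mul_inv, inv_pow]
    calc c m ≤ C₀ * (x⁻¹) ^ m := this
      _ ≤ max C₀ 1 * (x⁻¹) ^ m := by
          apply mul_le_mul_of_nonneg_right (le_max_left _ _)
          positivity
  -- notation for the sequence under study
  set u : ℕ → ℝ := fun m => (c m) ^ (1 / (m : ℝ)) with hu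
  have hunn : ∀ m, 0 ≤ u m := fun m => Real.rpow_nonneg (hcnn m) _
  have hucob : IsCoboundedUnder (· ≤ ·) atTop u :=
    IsBoundedUnder.isCoboundedUnder_le ⟨0, eventually_map.mpr (Eventually.of_forall hunn)⟩
  -- From the key estimate: boundedness and limsup upper bounds
  have step : ∀ x : ℝ, 0 < x → x < ρ →
      IsBoundedUnder (· ≤ ·) atTop u ∧ limsup u atTop ≤ x⁻¹ := by
    intro x hx hxρ
    obtain ⟨C, hC1, hCm⟩ := main x hx hxρ
    have hCpos : 0 < C := lt_of_lt_of_le one_pos hC1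
    set v : ℕ → ℝ := fun m => C ^ (1 / (m : ℝ)) * x⁻¹ with hv
    have huv : ∀ᶠ m : ℕ in atTop, u m ≤ v m := by
      filter_upwards [eventually_ge_atTop 1] with m hm
      have hm' : (m : ℝ) ≠ 0 := Nat.cast_ne_zero.mpr (by omega)
      have h1 : u m ≤ (C * (x⁻¹) ^ m) ^ (1 / (m : ℝ)) := by
        apply Real.rpow_le_rpow (hcnn m) (hCm m)
        positivity
      have h2 : (C * (x⁻¹) ^ m) ^ (1 / (m : ℝ)) = v m := by
        rw [Real.mul_rpow hCpos.le (by positivity)]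
        congr 1
        rw [← Real.rpow_natCast x⁻¹ m, ← Real.rpow_mul (by positivity),
          mul_one_div_cancel hm', Real.rpow_one]
      rw [h2] at h1
      exact h1
    have hvlim : Tendsto v atTop (nhds x⁻¹) := by
      have := (aux_tendsto_rpow_one_div hCpos).mul_const x⁻¹
      rwa [one_mul] at this
    have hvb : IsBoundedUnder (· ≤ ·) atTop v := hvlim.isBoundedUnder_le
    have hub : IsBoundedUnder (· ≤ ·) atTop u := hvb.mono_le huv
    refine ⟨hub, ?_⟩
    calc limsup u atTop ≤ limsup v atTop := limsup_le_limsup huv hucob hvb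
      _ = x⁻¹ := hvlim.limsup_eq
  obtain ⟨hubdd, -⟩ := step (ρ / 2) (by positivity) (by linarith)
  -- Upper bound
  have hupper : limsup u atTop ≤ ρ⁻¹ := by
    apply le_of_forall_gt_imp_ge_of_dense
    intro y hy
    have hy0 : 0 < y := lt_trans (by positivity) hy
    have hxρ : y⁻¹ < ρ := by
      rw [← inv_inv ρ]
      exact inv_strictAnti₀ (by positivity) hy
    have := (step y⁻¹ (by positivity) hxρ).2
    rwa [inv_inv] at this
  -- Lower bound
  have hlower : ρ⁻¹ ≤ limsup u atTop := by
    by_contra hcon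
    push_neg at hcon
    have hL0 : 0 ≤ limsup u atTop :=
      le_limsup_of_frequently_le (Frequently.of_forall hunn) hubdd
    obtain ⟨b, hb1, hb2⟩ := exists_between hcon
    have hbpos : 0 < b := lt_of_le_of_lt hL0 hb1
    -- eventually c m < b ^ m
    have hevb : ∀ᶠ m : ℕ in atTop, u m < b := eventually_lt_of_limsup_lt hb1 hubdd
    obtain ⟨M₀, hM₀⟩ := eventually_atTop.mp hevb
    set M := max M₀ 1 with hM
    -- pick ρ < x < b⁻¹
    have hρb : ρ < b⁻¹ := by
      rw [← inv_inv ρ]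
      exact inv_strictAnti₀ hbpos hb2
    obtain ⟨x, hx1, hx2⟩ := exists_between hρb
    have hx0 : 0 < x := lt_trans hρ hx1
    have hr1 : b * x < 1 := by
      have := mul_lt_mul_of_pos_left hx2 hbpos
      rwa [mul_inv_cancel₀ hbpos.ne'] at this
    have hr0 : 0 ≤ b * x := le_of_lt (mul_pos hbpos hx0)
    have hcb : ∀ m, M ≤ m → c m * x ^ m ≤ (b * x) ^ m := by
      intro m hm
      have h1 : c m < b ^ m :=
        aux_lt_pow_of_rpow_lt (hcnn m) (le_trans (le_max_right _ _) hm)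
          (hM₀ m (le_trans (le_max_left _ _) hm))
      rw [mul_pow]
      exact mul_le_mul_of_nonneg_right h1.le (pow_nonneg hx0.le m)
    set D : ℝ := (∑ m ∈ Finset.range M, c m * x ^ m) + (1 - b * x)⁻¹ with hD
    have hpartial : ∀ s : Finset ℕ, ∑ m ∈ s, c m * x ^ m ≤ D :=
      aux_sum_le_const (fun m => c m * x ^ m)
        (fun m => mul_nonneg (hcnn m) (pow_nonneg hx0.le m)) M hr0 hr1 hcb
    set gx := g.eval x with hgx
    have hgxpos : 0 < gx := hgx0 x hx0
    -- each σ n * gx^n is bounded by D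
    have hσD : ∀ n : ℕ, σ n * gx ^ n ≤ D := by
      intro n
      have heval : gx ^ n = ∑ m ∈ Finset.range ((g ^ n).natDegree + 1), (g ^ n).coeff m * x ^ m := by
        rw [← Polynomial.eval_pow, Polynomial.eval_eq_sum_range]
      have hterm : ∀ m : ℕ, σ n * ((g ^ n).coeff m * x ^ m) ≤ c m * x ^ m := by
        intro m
        rcases le_or_gt (2 * n) m with h2n | h2n
        · have hmem : n ∈ Finset.range (m / 2 + 1) := Finset.mem_range.mpr (by omega)
          have : σ n * (g ^ n).coeff m ≤ c m := by
            rw [hc m]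
            exact Finset.single_le_sum (f := fun k => σ k * (g ^ k).coeff m)
              (fun k _ => mul_nonneg (hσ k) (hb k m)) hmem
          calc σ n * ((g ^ n).coeff m * x ^ m) = σ n * (g ^ n).coeff m * x ^ m := by ring
            _ ≤ c m * x ^ m := mul_le_mul_of_nonneg_right this (pow_nonneg hx0.le m)
        · rw [aux_coeff_pow_eq_zero g hc0 hc1 n m h2n]
          have : (0:ℝ) ≤ c m * x ^ m := mul_nonneg (hcnn m) (pow_nonneg hx0.le m)
          simpa using this
      calc σ n * gx ^ n
          = ∑ m ∈ Finset.range ((g ^ n).natDegree + 1), σ n * ((g ^ n).coeff m * x ^ m) := by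
            rw [heval, Finset.mul_sum]
        _ ≤ ∑ m ∈ Finset.range ((g ^ n).natDegree + 1), c m * x ^ m :=
            Finset.sum_le_sum fun m _ => hterm m
        _ ≤ D := hpartial _
    -- but σ n * gx^n is frequently large, contradiction
    have hgxgt : μ⁻¹ < gx := by
      rw [← hgρ]
      exact aux_eval_lt_eval g hg0 hgpos hc0 hρ.le hx1
    have hKlt : gx⁻¹ < μ := by
      rw [← inv_inv μ]
      exact inv_strictAnti₀ (by positivity) hgxgt
    obtain ⟨K, hK1, hK2⟩ := exists_between hKlt
    have hKpos : 0 < K := lt_trans (by positivity) hK1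
    have hKgx : 1 < K * gx := by
      have := mul_lt_mul_of_pos_right hK1 hgxpos
      rwa [inv_mul_cancel₀ hgxpos.ne'] at this
    have hfreq : ∃ᶠ n : ℕ in atTop, K < (σ n) ^ (1 / (n : ℝ)) := by
      apply frequently_lt_of_lt_limsup
      · exact IsBoundedUnder.isCoboundedUnder_le
          ⟨0, eventually_map.mpr (Eventually.of_forall fun n => Real.rpow_nonneg (hσ n) _)⟩
      · rw [hlim]; exact hK2
    obtain ⟨N₁, hN₁⟩ := eventually_atTop.mp
      ((tendsto_pow_atTop_atTop_of_one_lt hKgx).eventually_gt_atTop D)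
    obtain ⟨n, hn, hKn⟩ := (frequently_atTop.mp hfreq) (max N₁ 1)
    have hn1 : 1 ≤ n := le_trans (le_max_right _ _) hn
    have hσn : K ^ n < σ n := aux_pow_lt_of_lt_rpow (hσ n) hKpos.le hn1 hKn
    have hbig : (K * gx) ^ n < σ n * gx ^ n := by
      rw [mul_pow]
      exact mul_lt_mul_of_pos_right hσn (pow_pos hgxpos n)
    have hDlt : D < (K * gx) ^ n := hN₁ n (le_trans (le_max_left _ _) hn)
    exact absurd (hσD n) (not_le.mpr (lt_trans hDlt hbig))
  exact le_antisymm hupper hlower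
end

section
/- Let σ : ℕ → [0,∞) be a nonnegative sequence, let N ≥ 2, and let g be a nonzero real polynomial with nonnegative coefficients whose coefficient in degree m vanishes unless 2 ≤ m ≤ N. Write b_{n,m} for the coefficient of degree m in g^n and define c(m) = Σ_{n : 2n ≤ m} σ(n) · b_{n,m}. Then for every real x > 0 and every real y, the series Σ_{m≥1} c(m) · x^m / m^y converges (has finite sum) if and only if the series Σ_{n≥1} σ(n) · g(x)^n / n^y converges. -/
open Polynomial

private lemma summable_iff_ofReal_ne_top {f : ℕ → ℝ} (hf : ∀ n, 0 ≤ f n) :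
    Summable f ↔ (∑' n, ENNReal.ofReal (f n)) ≠ ⊤ := by
  have h : Summable f ↔ Summable (fun n => (f n).toNNReal) := by
    rw [← NNReal.summable_coe]
    apply summable_congr
    intro n
    simp [Real.coe_toNNReal _ (hf n)]
  rw [h, ← ENNReal.tsum_coe_ne_top_iff_summable]
  rfl

private lemma div_le_aux {a M K C : ℝ} (ha : 0 ≤ a) (hM : 0 < M) (hK : 0 < K)
    (h : K ≤ C * M) : a / M ≤ C * a / K := by
  rw [div_le_div_iff₀ hM hK]
  calc a * K ≤ a * (C * M) := mul_le_mul_of_nonneg_left h ha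
    _ = C * a * M := by ring

private lemma le_div_aux {a M K C : ℝ} (ha : 0 ≤ a) (hM : 0 < M) (hK : 0 < K)
    (h : C * M ≤ K) : C * a / K ≤ a / M := by
  rw [div_le_div_iff₀ hK hM]
  calc C * a * M = a * (C * M) := by ring
    _ ≤ a * K := mul_le_mul_of_nonneg_left h ha

/-- With `σ : ℕ → [0,∞)`, `N ≥ 2`, `g` a nonzero real polynomial with
nonnegative coefficients supported in degrees `2 ≤ m ≤ N`, `b_{n,m}` the degree-`m`
coefficient of `g^n`, and `c(m) = Σ_{n : 2n ≤ m} σ(n) b_{n,m}`: for every `x > 0` and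
`y : ℝ`, the series `Σ_{m ≥ 1} c(m) x^m / m^y` converges iff
`Σ_{n ≥ 1} σ(n) g(x)^n / n^y` converges. -/
theorem stmt8 (σ : ℕ → ℝ) (hσ : ∀ n, 0 ≤ σ n) (N : ℕ) (hN : 2 ≤ N)
    (g : Polynomial ℝ) (hg0 : g ≠ 0) (hgpos : ∀ m : ℕ, 0 ≤ g.coeff m)
    (hsupp : ∀ m : ℕ, ¬(2 ≤ m ∧ m ≤ N) → g.coeff m = 0)
    (c : ℕ → ℝ)
    (hc : ∀ m : ℕ, c m = ∑ n ∈ Finset.range (m / 2 + 1), σ n * (g ^ n).coeff m)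
    (x : ℝ) (hx : 0 < x) (y : ℝ) :
    Summable (fun m : ℕ => c (m + 1) * x ^ (m + 1) / ((m + 1 : ℕ) : ℝ) ^ y) ↔
      Summable (fun n : ℕ => σ (n + 1) * (g.eval x) ^ (n + 1) / ((n + 1 : ℕ) : ℝ) ^ y) := by
  -- basic facts about g
  have hgdeg : g.natDegree ≤ N := by
    rw [Polynomial.natDegree_le_iff_coeff_eq_zero]
    intro m hm
    exact hsupp m (by omega)
  -- coefficients of powers are nonneg
  have L0 : ∀ n m : ℕ, 0 ≤ (g ^ n).coeff m := by
    intro n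
    induction n with
    | zero => intro m; simp [Polynomial.coeff_one]; positivity
    | succ n ih =>
      intro m
      rw [pow_succ, Polynomial.coeff_mul]
      apply Finset.sum_nonneg
      rintro ⟨i, j⟩ _
      exact mul_nonneg (ih i) (hgpos j)
  -- low coefficients vanish
  have L1 : ∀ n m : ℕ, m < 2 * n → (g ^ n).coeff m = 0 := by
    intro n
    induction n with
    | zero => intro m hm; omega
    | succ n ih =>
      intro m hm
      rw [pow_succ, Polynomial.coeff_mul]
      apply Finset.sum_eq_zero
      rintro ⟨i, j⟩ hij
      rw [Finset.HasAntidiagonal.mem_antidiagonal] at hij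
      by_cases hi : i < 2 * n
      · rw [ih i hi, zero_mul]
      · have hj : j < 2 := by omega
        rw [hsupp j (by omega), mul_zero]
  -- high coefficients vanish
  have L2 : ∀ n m : ℕ, N * n < m → (g ^ n).coeff m = 0 := by
    intro n m hm
    apply Polynomial.coeff_eq_zero_of_natDegree_lt
    calc (g ^ n).natDegree ≤ n * g.natDegree := Polynomial.natDegree_pow_le
      _ ≤ n * N := Nat.mul_le_mul_left n hgdeg
      _ < m := by rw [Nat.mul_comm]; exact hm
  -- g.eval x > 0
  have hgx : 0 < g.eval x := by
    have hlead : 0 < g.coeff g.natDegree := by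
      rcases lt_or_eq_of_le (hgpos g.natDegree) with h | h
      · exact h
      · exact absurd (Polynomial.leadingCoeff_eq_zero.mp h.symm) hg0
    rw [Polynomial.eval_eq_sum_range]
    have hmem : g.natDegree ∈ Finset.range (g.natDegree + 1) := Finset.self_mem_range_succ _
    calc (0:ℝ) < g.coeff g.natDegree * x ^ g.natDegree := by positivity
      _ ≤ _ := Finset.single_le_sum (f := fun i => g.coeff i * x ^ i)
          (fun i _ => by have := hgpos i; positivity) hmem
  -- evaluation identity for inner sums
  have hInner : ∀ n : ℕ, (∑' m : ℕ, ENNReal.ofReal ((g ^ (n+1)).coeff (m+1) * x ^ (m+1)))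
      = ENNReal.ofReal ((g.eval x) ^ (n+1)) := by
    intro n
    rw [tsum_eq_sum (s := Finset.range (N * (n+1)))
      (fun m hm => by
        rw [L2 (n+1) (m+1) (by simp [Finset.mem_range] at hm; omega), zero_mul,
          ENNReal.ofReal_zero])]
    rw [← ENNReal.ofReal_sum_of_nonneg (fun i _ => by have := L0 (n+1) (i+1); positivity)]
    congr 1
    have h0 : (g ^ (n+1)).coeff 0 * x ^ 0 = 0 := by
      rw [L1 (n+1) 0 (by omega), zero_mul]
    have := Finset.sum_range_succ' (fun j => (g ^ (n+1)).coeff j * x ^ j) (N * (n+1))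
    rw [h0, add_zero] at this
    rw [← this, ← Polynomial.eval_eq_sum_range' (n := N * (n+1) + 1)
      (by
        have : (g ^ (n+1)).natDegree ≤ (n+1) * g.natDegree := Polynomial.natDegree_pow_le
        have h2 : (n+1) * g.natDegree ≤ (n+1) * N := Nat.mul_le_mul_left _ hgdeg
        have h3 : (n+1) * N = N * (n+1) := Nat.mul_comm _ _
        omega) x]
    rw [Polynomial.eval_pow]
  -- rpow comparison constants
  set c2min : ℝ := min ((2:ℝ) ^ y) ((N:ℝ) ^ y) with hc2min
  set c1max : ℝ := max ((2:ℝ) ^ y) ((N:ℝ) ^ y) with hc1max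
  have hNpos : (0:ℝ) < (N:ℝ) := by
    have : 0 < N := by omega
    exact_mod_cast this
  have hc2pos : 0 < c2min := lt_min (Real.rpow_pos_of_pos (by norm_num) y)
    (Real.rpow_pos_of_pos hNpos y)
  have hc1pos : 0 < c1max := lt_of_lt_of_le hc2pos (min_le_max)
  -- the key rpow bound
  have hrpow : ∀ k m : ℕ, 2 * (k+1) ≤ m + 1 → m + 1 ≤ N * (k+1) →
      c2min * ((k+1 : ℕ) : ℝ) ^ y ≤ ((m+1 : ℕ) : ℝ) ^ y ∧
      ((m+1 : ℕ) : ℝ) ^ y ≤ c1max * ((k+1 : ℕ) : ℝ) ^ y := by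
    intro k m h2 hNk
    have hKpos : (0:ℝ) < ((k+1 : ℕ) : ℝ) := by positivity
    have h2' : 2 * ((k+1 : ℕ) : ℝ) ≤ ((m+1 : ℕ) : ℝ) := by exact_mod_cast h2
    have hN' : ((m+1 : ℕ) : ℝ) ≤ (N:ℝ) * ((k+1 : ℕ) : ℝ) := by exact_mod_cast hNk
    set t : ℝ := ((m+1 : ℕ) : ℝ) / ((k+1 : ℕ) : ℝ) with ht
    have ht2 : (2:ℝ) ≤ t := by rw [ht, le_div_iff₀ hKpos]; linarith
    have htN : t ≤ (N:ℝ) := by rw [ht, div_le_iff₀ hKpos]; linarith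
    have htpos : (0:ℝ) < t := by linarith
    have hsplit : ((m+1 : ℕ) : ℝ) ^ y = t ^ y * ((k+1 : ℕ) : ℝ) ^ y := by
      rw [← Real.mul_rpow (by positivity) hKpos.le, ht,
        div_mul_cancel₀ _ (ne_of_gt hKpos)]
    have htbound : c2min ≤ t ^ y ∧ t ^ y ≤ c1max := by
      rcases le_total 0 y with hy | hy
      · constructor
        · exact le_trans (min_le_left _ _) (Real.rpow_le_rpow (by norm_num) ht2 hy)
        · exact le_trans (Real.rpow_le_rpow htpos.le htN hy) (le_max_right _ _)
      · constructor
        · exact le_trans (min_le_right _ _) (Real.rpow_le_rpow_of_nonpos htpos htN hy)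
        · exact le_trans (Real.rpow_le_rpow_of_nonpos (by norm_num) ht2 hy) (le_max_left _ _)
    have hKy : (0:ℝ) ≤ ((k+1 : ℕ) : ℝ) ^ y := (Real.rpow_pos_of_pos hKpos y).le
    constructor
    · rw [hsplit]; exact mul_le_mul_of_nonneg_right htbound.1 hKy
    · rw [hsplit]; exact mul_le_mul_of_nonneg_right htbound.2 hKy
  -- ENNReal setup
  set T : ℕ → ℕ → ENNReal := fun n m =>
    ENNReal.ofReal (σ (n+1) * (g ^ (n+1)).coeff (m+1) * x ^ (m+1) / ((m+1 : ℕ) : ℝ) ^ y)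
    with hT
  have hf1nonneg : ∀ m : ℕ, 0 ≤ c (m+1) * x ^ (m+1) / ((m+1 : ℕ) : ℝ) ^ y := by
    intro m
    have hcpos : 0 ≤ c (m+1) := by
      rw [hc]
      exact Finset.sum_nonneg fun n _ => mul_nonneg (hσ n) (L0 n (m+1))
    have : (0:ℝ) < ((m+1 : ℕ) : ℝ) ^ y := Real.rpow_pos_of_pos (by positivity) y
    positivity
  have hf2nonneg : ∀ n : ℕ, 0 ≤ σ (n+1) * (g.eval x) ^ (n+1) / ((n+1 : ℕ) : ℝ) ^ y := by
    intro n
    have h1 := hσ (n+1)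
    have : (0:ℝ) < ((n+1 : ℕ) : ℝ) ^ y := Real.rpow_pos_of_pos (by positivity) y
    positivity
  rw [summable_iff_ofReal_ne_top hf1nonneg, summable_iff_ofReal_ne_top hf2nonneg]
  set A : ENNReal := ∑' m : ℕ, ENNReal.ofReal (c (m+1) * x ^ (m+1) / ((m+1 : ℕ) : ℝ) ^ y)
    with hA
  set B : ENNReal := ∑' n : ℕ, ENNReal.ofReal
      (σ (n+1) * (g.eval x) ^ (n+1) / ((n+1 : ℕ) : ℝ) ^ y) with hB
  -- Step A: A equals double sum of T
  have hAeq : A = ∑' n : ℕ, ∑' m : ℕ, T n m := by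
    rw [← ENNReal.tsum_comm]
    apply tsum_congr
    intro m
    have hMpos : (0:ℝ) < ((m+1 : ℕ) : ℝ) ^ y := Real.rpow_pos_of_pos (by positivity) y
    have hsum : c (m+1) * x ^ (m+1) / ((m+1 : ℕ) : ℝ) ^ y =
        ∑ i ∈ Finset.range ((m+1) / 2),
          σ (i+1) * (g ^ (i+1)).coeff (m+1) * x ^ (m+1) / ((m+1 : ℕ) : ℝ) ^ y := by
      rw [hc, Finset.sum_mul, Finset.sum_div]
      rw [Finset.sum_range_succ'
        (fun n => σ n * (g ^ n).coeff (m+1) * x ^ (m+1) / ((m+1 : ℕ) : ℝ) ^ y) ((m+1)/2)]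
      have h0 : (g ^ 0).coeff (m+1) = 0 := by
        simp [Polynomial.coeff_one]
      rw [h0]
      simp
    rw [hsum, ENNReal.ofReal_sum_of_nonneg (fun i _ => by
      have h1 := hσ (i+1); have h2 := L0 (i+1) (m+1); positivity)]
    rw [tsum_eq_sum (s := Finset.range ((m+1) / 2)) (fun n hn => by
      rw [hT]
      have : (g ^ (n+1)).coeff (m+1) = 0 := by
        apply L1
        simp [Finset.mem_range] at hn
        omega
      simp [this])]
  -- inner bounds
  have hup : ∀ n : ℕ, (∑' m : ℕ, T n m) ≤ ENNReal.ofReal c2min⁻¹ *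
      ENNReal.ofReal (σ (n+1) * (g.eval x) ^ (n+1) / ((n+1 : ℕ) : ℝ) ^ y) := by
    intro n
    have hKpos : (0:ℝ) < ((n+1 : ℕ) : ℝ) ^ y := Real.rpow_pos_of_pos (by positivity) y
    set D : ℝ := c2min⁻¹ * σ (n+1) / ((n+1 : ℕ) : ℝ) ^ y with hD
    have hDnn : 0 ≤ D := by
      have := hσ (n+1); positivity
    calc (∑' m : ℕ, T n m)
        ≤ ∑' m : ℕ, ENNReal.ofReal D * ENNReal.ofReal ((g ^ (n+1)).coeff (m+1) * x ^ (m+1)) := by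
          apply ENNReal.tsum_le_tsum
          intro m
          rw [hT, ← ENNReal.ofReal_mul hDnn]
          apply ENNReal.ofReal_le_ofReal
          by_cases hb : (g ^ (n+1)).coeff (m+1) = 0
          · rw [hb]
            simp
          · have hlo : 2 * (n+1) ≤ m + 1 := by
              by_contra h
              exact hb (L1 (n+1) (m+1) (by omega))
            have hhi : m + 1 ≤ N * (n+1) := by
              by_contra h
              exact hb (L2 (n+1) (m+1) (by omega))
            have hMpos : (0:ℝ) < ((m+1 : ℕ) : ℝ) ^ y := Real.rpow_pos_of_pos (by positivity) y
            have hbnd := (hrpow n m hlo hhi).1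
            have hann : 0 ≤ σ (n+1) * (g ^ (n+1)).coeff (m+1) * x ^ (m+1) := by
              have h1 := hσ (n+1); have h2 := L0 (n+1) (m+1); positivity
            have hKle : ((n+1 : ℕ) : ℝ) ^ y ≤ c2min⁻¹ * ((m+1 : ℕ) : ℝ) ^ y := by
              rw [← inv_mul_cancel_left₀ (ne_of_gt hc2pos) (((n+1 : ℕ) : ℝ) ^ y)]
              exact mul_le_mul_of_nonneg_left hbnd (by positivity)
            calc σ (n+1) * (g ^ (n+1)).coeff (m+1) * x ^ (m+1) / ((m+1 : ℕ) : ℝ) ^ y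
                ≤ c2min⁻¹ * (σ (n+1) * (g ^ (n+1)).coeff (m+1) * x ^ (m+1)) /
                  ((n+1 : ℕ) : ℝ) ^ y := div_le_aux hann hMpos hKpos hKle
              _ = D * ((g ^ (n+1)).coeff (m+1) * x ^ (m+1)) := by rw [hD]; ring
      _ = ENNReal.ofReal D * ENNReal.ofReal ((g.eval x) ^ (n+1)) := by
          rw [ENNReal.tsum_mul_left, hInner n]
      _ = ENNReal.ofReal c2min⁻¹ *
          ENNReal.ofReal (σ (n+1) * (g.eval x) ^ (n+1) / ((n+1 : ℕ) : ℝ) ^ y) := by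
          rw [hD, ← ENNReal.ofReal_mul (by have := hσ (n+1); positivity),
            ← ENNReal.ofReal_mul (by positivity)]
          congr 1
          ring
  have hlo : ∀ n : ℕ, ENNReal.ofReal c1max⁻¹ *
      ENNReal.ofReal (σ (n+1) * (g.eval x) ^ (n+1) / ((n+1 : ℕ) : ℝ) ^ y)
      ≤ ∑' m : ℕ, T n m := by
    intro n
    have hKpos : (0:ℝ) < ((n+1 : ℕ) : ℝ) ^ y := Real.rpow_pos_of_pos (by positivity) y
    set D : ℝ := c1max⁻¹ * σ (n+1) / ((n+1 : ℕ) : ℝ) ^ y with hD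
    have hDnn : 0 ≤ D := by
      have := hσ (n+1); positivity
    calc ENNReal.ofReal c1max⁻¹ *
          ENNReal.ofReal (σ (n+1) * (g.eval x) ^ (n+1) / ((n+1 : ℕ) : ℝ) ^ y)
        = ENNReal.ofReal D * ENNReal.ofReal ((g.eval x) ^ (n+1)) := by
          rw [hD, ← ENNReal.ofReal_mul (by have := hσ (n+1); positivity),
            ← ENNReal.ofReal_mul (by positivity)]
          congr 1
          ring
      _ = ∑' m : ℕ, ENNReal.ofReal D * ENNReal.ofReal ((g ^ (n+1)).coeff (m+1) * x ^ (m+1)) := by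
          rw [ENNReal.tsum_mul_left, hInner n]
      _ ≤ ∑' m : ℕ, T n m := by
          apply ENNReal.tsum_le_tsum
          intro m
          rw [hT, ← ENNReal.ofReal_mul hDnn]
          apply ENNReal.ofReal_le_ofReal
          by_cases hb : (g ^ (n+1)).coeff (m+1) = 0
          · rw [hb]
            simp
          · have hlo2 : 2 * (n+1) ≤ m + 1 := by
              by_contra h
              exact hb (L1 (n+1) (m+1) (by omega))
            have hhi : m + 1 ≤ N * (n+1) := by
              by_contra h
              exact hb (L2 (n+1) (m+1) (by omega))
            have hMpos : (0:ℝ) < ((m+1 : ℕ) : ℝ) ^ y := Real.rpow_pos_of_pos (by positivity) y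
            have hbnd := (hrpow n m hlo2 hhi).2
            have hann : 0 ≤ σ (n+1) * (g ^ (n+1)).coeff (m+1) * x ^ (m+1) := by
              have h1 := hσ (n+1); have h2 := L0 (n+1) (m+1); positivity
            have hMle : c1max⁻¹ * ((m+1 : ℕ) : ℝ) ^ y ≤ ((n+1 : ℕ) : ℝ) ^ y := by
              rw [← inv_mul_cancel_left₀ (ne_of_gt hc1pos) (((n+1 : ℕ) : ℝ) ^ y)]
              exact mul_le_mul_of_nonneg_left hbnd (by positivity)
            calc D * ((g ^ (n+1)).coeff (m+1) * x ^ (m+1))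
                = c1max⁻¹ * (σ (n+1) * (g ^ (n+1)).coeff (m+1) * x ^ (m+1)) /
                  ((n+1 : ℕ) : ℝ) ^ y := by rw [hD]; ring
              _ ≤ σ (n+1) * (g ^ (n+1)).coeff (m+1) * x ^ (m+1) / ((m+1 : ℕ) : ℝ) ^ y :=
                  le_div_aux hann hMpos hKpos hMle
  have hAup : A ≤ ENNReal.ofReal c2min⁻¹ * B := by
    rw [hAeq, hB, ← ENNReal.tsum_mul_left]
    exact ENNReal.tsum_le_tsum hup
  have hAlo : ENNReal.ofReal c1max⁻¹ * B ≤ A := by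
    rw [hAeq, hB, ← ENNReal.tsum_mul_left]
    exact ENNReal.tsum_le_tsum hlo
  constructor
  · intro hAne
    intro hBtop
    have h1 : ENNReal.ofReal c1max⁻¹ * B = ⊤ := by
      rw [hBtop, ENNReal.mul_top]
      simp only [ne_eq, ENNReal.ofReal_eq_zero, not_le]
      positivity
    exact hAne (top_le_iff.mp (h1 ▸ hAlo))
  · intro hBne
    exact ne_top_of_le_ne_top (ENNReal.mul_ne_top ENNReal.ofReal_ne_top hBne) hAup
end

section
/- Let u, v : ℕ → [0,∞) be nonnegative sequences, K ∈ ℕ, and C, B ∈ [0,∞). Suppose that v(n) ≤ u(n) for all n, and that u(n) ≤ C · Σ_{i=0}^{min(K,n)} v(n−i) + B·𝟙[n ≤ K] for all n. Then for every real x > 0 and every real y, the series Σ_{n≥1} u(n) · x^n / n^y converges (has finite sum) if and only if the series Σ_{n≥1} v(n) · x^n / n^y converges. -/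
open Finset

private lemma aux_rpow (a b c y : ℝ) (ha : 1 ≤ a) (hab : a ≤ b) (hba : b ≤ c * a)
    (hc : 1 ≤ c) : a ^ y ≤ c ^ |y| * b ^ y := by
  have ha0 : (0:ℝ) < a := lt_of_lt_of_le one_pos ha
  have hb0 : (0:ℝ) < b := lt_of_lt_of_le ha0 hab
  have hc0 : (0:ℝ) < c := lt_of_lt_of_le one_pos hc
  rcases le_or_gt 0 y with hy | hy
  · rw [abs_of_nonneg hy]
    have h1 : a ^ y ≤ b ^ y := Real.rpow_le_rpow ha0.le hab hy
    have h2 : (1:ℝ) ≤ c ^ y := by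
      calc (1:ℝ) = c ^ (0:ℝ) := (Real.rpow_zero c).symm
        _ ≤ c ^ y := Real.rpow_le_rpow_of_exponent_le hc hy
    nlinarith [Real.rpow_nonneg hb0.le y]
  · rw [abs_of_neg hy]
    have key : b / a ≤ c := (div_le_iff₀ ha0).2 hba
    have e : (b/a) ^ (-y) * b ^ y = a ^ y := by
      rw [Real.rpow_neg (by positivity), ← Real.inv_rpow (by positivity), inv_div,
        Real.div_rpow ha0.le hb0.le, div_mul_cancel₀ _ (Real.rpow_pos_of_pos hb0 y).ne']
    have h1 : (b/a) ^ (-y) ≤ c ^ (-y) :=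
      Real.rpow_le_rpow (by positivity) key (by linarith)
    calc a ^ y = (b/a) ^ (-y) * b ^ y := e.symm
      _ ≤ c ^ (-y) * b ^ y :=
        mul_le_mul_of_nonneg_right h1 (Real.rpow_nonneg hb0.le y)

/-- If `0 ≤ v(n) ≤ u(n)` and
`u(n) ≤ C · Σ_{i=0}^{min(K,n)} v(n-i) + B·𝟙[n ≤ K]` for all `n`, then for all `x > 0`
and `y : ℝ` the series `Σ_{n ≥ 1} u(n) x^n / n^y` converges iff
`Σ_{n ≥ 1} v(n) x^n / n^y` converges. -/
theorem stmt9 (u v : ℕ → ℝ) (hv0 : ∀ n, 0 ≤ v n) (K : ℕ) (C B : ℝ)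
    (hC : 0 ≤ C) (hB : 0 ≤ B)
    (hvu : ∀ n, v n ≤ u n)
    (hu : ∀ n, u n ≤ C * (∑ i ∈ Finset.range (min K n + 1), v (n - i)) +
      B * (if n ≤ K then 1 else 0))
    (x : ℝ) (hx : 0 < x) (y : ℝ) :
    Summable (fun n : ℕ => u (n + 1) * x ^ (n + 1) / ((n + 1 : ℕ) : ℝ) ^ y) ↔
      Summable (fun n : ℕ => v (n + 1) * x ^ (n + 1) / ((n + 1 : ℕ) : ℝ) ^ y) := by
  have hp : ∀ n : ℕ, (0:ℝ) < ((n + 1 : ℕ) : ℝ) ^ y := fun n =>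
    Real.rpow_pos_of_pos (by positivity) _
  constructor
  · intro h
    apply h.of_nonneg_of_le
    · intro n
      exact div_nonneg (mul_nonneg (hv0 _) (pow_pos hx _).le) (hp n).le
    · intro n
      gcongr
      exact hvu _
  · intro h
    -- per-shift summability
    have key : ∀ i : ℕ, Summable
        (fun n : ℕ => v (n + 1 - i) * x ^ (n + 1) / ((n + 1 : ℕ) : ℝ) ^ y) := by
      intro i
      rw [← summable_nat_add_iff i]
      have hred : ∀ n : ℕ, n + i + 1 - i = n + 1 := fun n => by omega
      simp only [hred]
      apply Summable.of_nonneg_of_le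
        (f := fun n => x ^ i * ((i:ℝ) + 1) ^ |y| *
          (v (n + 1) * x ^ (n + 1) / ((n + 1 : ℕ) : ℝ) ^ y))
      · intro n
        have : (0:ℝ) < ((n + i + 1 : ℕ) : ℝ) ^ y :=
          Real.rpow_pos_of_pos (by positivity) _
        exact div_nonneg (mul_nonneg (hv0 _) (pow_pos hx _).le) this.le
      · intro n
        have haux : ((n + 1 : ℕ) : ℝ) ^ y ≤
            ((i:ℝ) + 1) ^ |y| * ((n + i + 1 : ℕ) : ℝ) ^ y := by
          apply aux_rpow
          · push_cast; linarith [Nat.cast_nonneg (α := ℝ) n]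
          · push_cast; linarith [Nat.cast_nonneg (α := ℝ) i]
          · push_cast; nlinarith [Nat.cast_nonneg (α := ℝ) n, Nat.cast_nonneg (α := ℝ) i]
          · linarith [Nat.cast_nonneg (α := ℝ) i]
        have hb : (0:ℝ) < ((n + i + 1 : ℕ) : ℝ) ^ y :=
          Real.rpow_pos_of_pos (by positivity) _
        have h1 : 1 / ((n + i + 1 : ℕ) : ℝ) ^ y ≤
            ((i:ℝ) + 1) ^ |y| / ((n + 1 : ℕ) : ℝ) ^ y := by
          rw [div_le_div_iff₀ hb (hp n)]
          linarith
        calc v (n + 1) * x ^ (n + i + 1) / ((n + i + 1 : ℕ) : ℝ) ^ y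
            = (v (n + 1) * x ^ (n + 1) * x ^ i) * (1 / ((n + i + 1 : ℕ) : ℝ) ^ y) := by
              rw [show n + i + 1 = (n + 1) + i from by omega, pow_add]; ring
          _ ≤ (v (n + 1) * x ^ (n + 1) * x ^ i) *
              (((i:ℝ) + 1) ^ |y| / ((n + 1 : ℕ) : ℝ) ^ y) := by
              exact mul_le_mul_of_nonneg_left h1
                (mul_nonneg (mul_nonneg (hv0 _) (pow_pos hx _).le) (pow_pos hx _).le)
          _ = x ^ i * ((i:ℝ) + 1) ^ |y| *
              (v (n + 1) * x ^ (n + 1) / ((n + 1 : ℕ) : ℝ) ^ y) := by ring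
      · exact h.mul_left _
    have hsum1 : Summable (fun n : ℕ => C * ∑ i ∈ range (K + 1),
        v (n + 1 - i) * x ^ (n + 1) / ((n + 1 : ℕ) : ℝ) ^ y) :=
      (summable_sum (fun i _ => key i)).mul_left C
    have hsum2 : Summable (fun n : ℕ =>
        B * (if n + 1 ≤ K then 1 else 0) * x ^ (n + 1) / ((n + 1 : ℕ) : ℝ) ^ y) := by
      apply summable_of_ne_finset_zero (s := range K)
      intro n hn
      simp only [mem_range, not_lt] at hn
      rw [if_neg (by omega)]
      simp
    apply (hsum1.add hsum2).of_nonneg_of_le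
    · intro n
      exact div_nonneg (mul_nonneg ((hv0 _).trans (hvu _)) (pow_pos hx _).le) (hp n).le
    · intro n
      have hS : (∑ i ∈ range (min K (n + 1) + 1), v (n + 1 - i)) ≤
          ∑ i ∈ range (K + 1), v (n + 1 - i) :=
        Finset.sum_le_sum_of_subset_of_nonneg
          (Finset.range_subset_range.2 (by omega)) (fun i _ _ => hv0 _)
      have hu' := hu (n + 1)
      have hq : (0:ℝ) ≤ x ^ (n + 1) / ((n + 1 : ℕ) : ℝ) ^ y :=
        div_nonneg (pow_pos hx _).le (hp n).le
      have e : (∑ i ∈ range (K + 1), v (n + 1 - i) * x ^ (n + 1) / ((n + 1 : ℕ) : ℝ) ^ y)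
          = (∑ i ∈ range (K + 1), v (n + 1 - i)) * (x ^ (n + 1) / ((n + 1 : ℕ) : ℝ) ^ y) := by
        rw [Finset.sum_mul]
        exact Finset.sum_congr rfl (fun i _ => by rw [mul_div_assoc])
      calc u (n + 1) * x ^ (n + 1) / ((n + 1 : ℕ) : ℝ) ^ y
          = u (n + 1) * (x ^ (n + 1) / ((n + 1 : ℕ) : ℝ) ^ y) := by ring
        _ ≤ (C * (∑ i ∈ range (K + 1), v (n + 1 - i)) +
              B * (if n + 1 ≤ K then 1 else 0)) * (x ^ (n + 1) / ((n + 1 : ℕ) : ℝ) ^ y) := by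
            apply mul_le_mul_of_nonneg_right _ hq
            calc u (n + 1) ≤ C * (∑ i ∈ range (min K (n + 1) + 1), v (n + 1 - i)) +
                  B * (if n + 1 ≤ K then 1 else 0) := hu'
              _ ≤ _ := by
                  apply add_le_add_left
                  exact mul_le_mul_of_nonneg_left hS hC
        _ = C * (∑ i ∈ range (K + 1), v (n + 1 - i) * x ^ (n + 1) / ((n + 1 : ℕ) : ℝ) ^ y) +
            B * (if n + 1 ≤ K then 1 else 0) * x ^ (n + 1) / ((n + 1 : ℕ) : ℝ) ^ y := by
            rw [e]; ring
end

section
/- Let u, v : ℕ → [0,∞) be nonnegative sequences, K ∈ ℕ, and C, B ∈ [0,∞). Suppose that v(n) ≤ u(n) for all n, and that u(n) ≤ C · Σ_{i=0}^{min(K,n)} v(n−i) + B·𝟙[n ≤ K] for all n. If limsup_{n→∞} v(n)^{1/n} = L for some L ∈ (0,∞), then limsup_{n→∞} u(n)^{1/n} = L. -/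
/-! Pick `L < M < N`. Eventually `v n ≤ M ^ n`, so for `n > K` the window bound gives
`u n ≤ A * M ^ n` with `A = C * ∑_{i ≤ K} M⁻¹ ^ i`; since `A ^ (1/n) → 1`, eventually
`u(n)^{1/n} ≤ N`. Hence `limsup u(n)^{1/n} ≤ L`, and `v ≤ u` gives the reverse inequality. -/

open Filter Topology Finset

lemma eventually_le_pow_of_limsup_rpow_lt {v : ℕ → ℝ} {M : ℝ} (hv0 : ∀ n, 0 ≤ v n)
    (hbdd : IsBoundedUnder (· ≤ ·) atTop fun n : ℕ => v n ^ (1 / (n : ℝ)))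
    (h : limsup (fun n : ℕ => v n ^ (1 / (n : ℝ))) atTop < M) :
    ∀ᶠ n in atTop, v n ≤ M ^ n := by
  filter_upwards [eventually_lt_of_limsup_lt h hbdd, eventually_ne_atTop 0] with n hn hn0
  calc v n = (v n ^ (1 / (n : ℝ))) ^ n := by
        rw [one_div, Real.rpow_inv_natCast_pow (hv0 n) hn0]
    _ ≤ M ^ n := pow_le_pow_left₀ (Real.rpow_nonneg (hv0 n) _) hn.le n

lemma eventually_sum_sub_le_geom_mul_pow {v : ℕ → ℝ} {M : ℝ} (hM : 0 < M)
    (hv : ∀ᶠ n in atTop, v n ≤ M ^ n) (K : ℕ) :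
    ∀ᶠ n in atTop,
      ∑ i ∈ range K, v (n - i) ≤ (∑ i ∈ range K, M⁻¹ ^ i) * M ^ n := by
  obtain ⟨N, hN⟩ := eventually_atTop.1 hv
  filter_upwards [eventually_ge_atTop (N + K)] with n hn
  rw [sum_mul]
  refine sum_le_sum fun i hi => ?_
  have hiK : i < K := mem_range.1 hi
  calc v (n - i) ≤ M ^ (n - i) := hN _ (by omega)
    _ = M⁻¹ ^ i * M ^ n := by rw [pow_sub₀ M hM.ne' (by omega), inv_pow, mul_comm]

lemma eventually_le_mul_pow_of_le_window_sum {u v : ℕ → ℝ} {K : ℕ} {B C M : ℝ}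
    (hC : 0 ≤ C)
    (hu : ∀ n, u n ≤ C * (∑ i ∈ range (min K n + 1), v (n - i)) +
      B * (if n ≤ K then 1 else 0))
    (hM : 0 < M) (hv : ∀ᶠ n in atTop, v n ≤ M ^ n) :
    ∀ᶠ n in atTop, u n ≤ C * (∑ i ∈ range (K + 1), M⁻¹ ^ i) * M ^ n := by
  filter_upwards [eventually_sum_sub_le_geom_mul_pow hM hv (K + 1), eventually_gt_atTop K]
    with n hsum hKn
  calc u n ≤ C * ∑ i ∈ range (K + 1), v (n - i) := by
        simpa [min_eq_left hKn.le, not_le.2 hKn] using hu n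
    _ ≤ C * (∑ i ∈ range (K + 1), M⁻¹ ^ i) * M ^ n := by
        rw [mul_assoc]; exact mul_le_mul_of_nonneg_left hsum hC

lemma eventually_rpow_le_of_le_mul_pow {u : ℕ → ℝ} {A M N : ℝ} (hu0 : ∀ n, 0 ≤ u n)
    (hM : 0 ≤ M) (h : ∀ᶠ n in atTop, u n ≤ A * M ^ n) (hMN : M < N) :
    ∀ᶠ n in atTop, u n ^ (1 / (n : ℝ)) ≤ N := by
  set A' := max A 1
  have hA' : 0 < A' := zero_lt_one.trans_le (le_max_right A 1)
  have htend : Tendsto (fun n : ℕ => A' ^ (1 / (n : ℝ)) * M) atTop (𝓝 M) := by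
    simpa using (tendsto_const_nhds.rpow tendsto_one_div_atTop_nhds_zero_nat
      (Or.inl hA'.ne')).mul_const M
  filter_upwards [h, htend.eventually (ge_mem_nhds hMN), eventually_ne_atTop 0]
    with n hun hlt hn0
  calc u n ^ (1 / (n : ℝ)) ≤ (A' * M ^ n) ^ (1 / (n : ℝ)) :=
        Real.rpow_le_rpow (hu0 n) (hun.trans (by gcongr; exact le_max_left A 1)) (by positivity)
    _ = A' ^ (1 / (n : ℝ)) * M := by
        rw [Real.mul_rpow hA'.le (pow_nonneg hM n), one_div, Real.pow_rpow_inv_natCast hM hn0]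
    _ ≤ N := hlt

theorem stmt10_general (u v : ℕ → ℝ) (hv0 : ∀ n, 0 ≤ v n) (K : ℕ) (C B : ℝ)
    (hC : 0 ≤ C)
    (hvu : ∀ n, v n ≤ u n)
    (hu : ∀ n, u n ≤ C * (∑ i ∈ Finset.range (min K n + 1), v (n - i)) +
      B * (if n ≤ K then 1 else 0))
    (L : ℝ) (hL : 0 < L)
    (hlim : Filter.limsup (fun n : ℕ => (v n) ^ (1 / (n : ℝ))) Filter.atTop = L) :
    Filter.limsup (fun n : ℕ => (u n) ^ (1 / (n : ℝ))) Filter.atTop = L := by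
  have hu0 : ∀ n, 0 ≤ u n := fun n => (hv0 n).trans (hvu n)
  have hvbdd : IsBoundedUnder (· ≤ ·) atTop fun n : ℕ => v n ^ (1 / (n : ℝ)) := by
    -- an unbounded real sequence has junk `limsup` equal to `0`
    by_contra hunb
    exact hL.ne' (hlim ▸ Real.limsup_of_not_isBoundedUnder hunb)
  have hgrowth : ∀ N > L, ∀ᶠ n in atTop, u n ^ (1 / (n : ℝ)) ≤ N := by
    intro N hLN
    obtain ⟨M, hLM, hMN⟩ := exists_between hLN
    have hM : 0 < M := hL.trans hLM
    have hv : ∀ᶠ n in atTop, v n ≤ M ^ n :=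
      eventually_le_pow_of_limsup_rpow_lt hv0 hvbdd (hlim ▸ hLM)
    exact eventually_rpow_le_of_le_mul_pow hu0 hM.le
      (eventually_le_mul_pow_of_le_window_sum hC hu hM hv) hMN
  have hucobdd : IsCoboundedUnder (· ≤ ·) atTop fun n : ℕ => u n ^ (1 / (n : ℝ)) :=
    isCoboundedUnder_le_of_le atTop fun n => Real.rpow_nonneg (hu0 n) _
  have hvcobdd : IsCoboundedUnder (· ≤ ·) atTop fun n : ℕ => v n ^ (1 / (n : ℝ)) :=
    isCoboundedUnder_le_of_le atTop fun n => Real.rpow_nonneg (hv0 n) _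
  have hubdd : IsBoundedUnder (· ≤ ·) atTop fun n : ℕ => u n ^ (1 / (n : ℝ)) :=
    ⟨L + 1, hgrowth _ (lt_add_one L)⟩
  refine le_antisymm ((limsup_le_iff' hucobdd hubdd).2 hgrowth) (hlim ▸ ?_)
  exact limsup_le_limsup (.of_forall fun n => Real.rpow_le_rpow (hv0 n) (hvu n) (by positivity))
    hvcobdd hubdd

/-- If `0 ≤ v(n) ≤ u(n)`,
`u(n) ≤ C · Σ_{i=0}^{min(K,n)} v(n-i) + B·𝟙[n ≤ K]` for all `n`, and
`limsup v(n)^{1/n} = L ∈ (0,∞)`, then `limsup u(n)^{1/n} = L`. -/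
theorem stmt10 (u v : ℕ → ℝ) (hv0 : ∀ n, 0 ≤ v n) (K : ℕ) (C B : ℝ)
    (hC : 0 ≤ C) (hB : 0 ≤ B)
    (hvu : ∀ n, v n ≤ u n)
    (hu : ∀ n, u n ≤ C * (∑ i ∈ Finset.range (min K n + 1), v (n - i)) +
      B * (if n ≤ K then 1 else 0))
    (L : ℝ) (hL : 0 < L)
    (hlim : Filter.limsup (fun n : ℕ => (v n) ^ (1 / (n : ℝ))) Filter.atTop = L) :
    Filter.limsup (fun n : ℕ => (u n) ^ (1 / (n : ℝ))) Filter.atTop = L :=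
  stmt10_general u v hv0 K C B hC hvu hu L hL hlim
end
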